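/- arXiv:2411.06614 — 4 statements merged into one kernel-verified Lean document; each statement's English description precedes it below -/
import Mathlib

section
/- Let A ∈ ℝ^{m×n} (m ≥ 2) have rows A_1,…,A_m with ‖A_i‖ = 1 for all i and A_i ≠ ±A_j for i ≠ j. Then for every x ∈ ℝ^n, (1/(m(m−1))) · Σ_{i≠j} ‖φ_{i,j}(A) x‖² ≥ ‖Ax‖² + (2/(m(m−1))) · ( ‖Ax‖² − ‖AᵀAx‖² ). -/
/-!
Write `a = A x` and `c = ⟨A_i, A_j⟩`. Since the rows are unit vectors and not `±` each other,
strict Cauchy–Schwarz gives `c² < 1`, and `φ_{i,j}(A) x` differs from `a` only in coordinate `i`,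
which becomes `(a_i - c a_j) / √(1 - c²)`. The elementary bound
`(a_i - c a_j)² / (1 - c²) ≥ a_i² - 2 c a_i a_j` gives `‖φ_{i,j}(A) x‖² ≥ ‖a‖² - 2 c a_i a_j`.
Summing over ordered pairs, the cross terms `∑_{i ≠ j} ⟨A_i, A_j⟩ a_i a_j` are the off-diagonal
part of the Gram form `aᵀ A Aᵀ a = ‖Aᵀ a‖²`, whose diagonal part is `‖a‖²` because the rows are
unit vectors.
-/

open Finset Matrix

/-- The Kaczmarz Kac update: replace row `i` of `A` by the renormalized projection of
`A i` onto the orthogonal complement of `A j`. -/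
noncomputable def kkPhi {m n : ℕ} (A : Matrix (Fin m) (Fin n) ℝ) (i j : Fin m) :
    Matrix (Fin m) (Fin n) ℝ :=
  A.updateRow i (fun k =>
    (A i k - (∑ l, A i l * A j l) * A j k) / Real.sqrt (1 - (∑ l, A i l * A j l) ^ 2))

section DotProduct

variable {ι κ R : Type*} [Fintype ι] [Fintype κ]

theorem sum_sq_eq_dotProduct_self [Semiring R] (v : ι → R) : ∑ k, v k ^ 2 = v ⬝ᵥ v := by
  simp only [dotProduct, sq]

theorem update_dotProduct_update_self [CommRing R] [DecidableEq ι] (f : ι → R) (i : ι) (y : R) :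
    Function.update f i y ⬝ᵥ Function.update f i y = f ⬝ᵥ f - f i ^ 2 + y ^ 2 := by
  simp only [dotProduct, ← add_sum_erase _ _ (mem_univ i), Function.update_self]
  rw [sum_congr rfl fun k hk => by rw [Function.update_of_ne (ne_of_mem_erase hk)]]
  ring

theorem sq_dotProduct_lt_one {u v : ι → ℝ} (hu : u ⬝ᵥ u = 1) (hv : v ⬝ᵥ v = 1)
    (hne : u ≠ v) (hne_neg : u ≠ -v) : (u ⬝ᵥ v) ^ 2 < 1 := by
  set c := u ⬝ᵥ v
  have hres : (u - c • v) ⬝ᵥ (u - c • v) = 1 - c ^ 2 := by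
    simp only [sub_dotProduct, dotProduct_sub, smul_dotProduct, dotProduct_smul, hu, hv,
      dotProduct_comm v u, smul_eq_mul]
    ring
  refine lt_of_le_of_ne ?_ fun hc => ?_
  · nlinarith [hres ▸ dotProduct_self_star_nonneg (u - c • v)]
  · have hu_eq : u = c • v := sub_eq_zero.mp (dotProduct_self_eq_zero.mp (by linarith))
    rcases sq_eq_one_iff.mp hc with h | h
    · exact hne (by rw [hu_eq, h, one_smul])
    · exact hne_neg (by rw [hu_eq, h, neg_one_smul])

theorem transpose_mulVec_dotProduct_self [CommRing R] (A : Matrix ι κ R) (a : ι → R) :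
    (Aᵀ *ᵥ a) ⬝ᵥ (Aᵀ *ᵥ a) = ∑ i, ∑ j, (A i ⬝ᵥ A j) * a i * a j := by
  rw [mulVec_transpose, ← dotProduct_mulVec, mulVec_vecMul]
  simp only [dotProduct, mulVec, mul_apply, transpose_apply, mul_sum]
  refine sum_congr rfl fun i _ => sum_congr rfl fun j _ => ?_
  ring

theorem sum_offDiag_gram_eq [CommRing R] [DecidableEq ι] {A : Matrix ι κ R}
    (hA : ∀ i, A i ⬝ᵥ A i = 1) (a : ι → R) :
    ∑ i, ∑ j ∈ univ.filter (· ≠ i), (A i ⬝ᵥ A j) * a i * a j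
      = (Aᵀ *ᵥ a) ⬝ᵥ (Aᵀ *ᵥ a) - a ⬝ᵥ a := by
  have hrow (i : ι) : ∑ j, (A i ⬝ᵥ A j) * a i * a j
      = a i * a i + ∑ j ∈ univ.filter (· ≠ i), (A i ⬝ᵥ A j) * a i * a j := by
    rw [filter_ne', ← add_sum_erase _ _ (mem_univ i), hA, one_mul]
  rw [transpose_mulVec_dotProduct_self, sum_congr rfl fun i _ => hrow i, sum_add_distrib,
    dotProduct]
  ring

end DotProduct

theorem sq_sub_two_mul_le_sq_sub_div {a b c : ℝ} (hc : c ^ 2 < 1) :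
    a ^ 2 - 2 * (c * a * b) ≤ (a - c * b) ^ 2 / (1 - c ^ 2) := by
  have hpos : 0 < 1 - c ^ 2 := by linarith
  rw [le_div_iff₀ hpos]
  -- the difference of the two sides is `c² ((a - c b)² + (1 - c²) b²)`
  nlinarith [mul_nonneg (sq_nonneg c) (add_nonneg (sq_nonneg (a - c * b))
    (mul_nonneg hpos.le (sq_nonneg b)))]

theorem kkPhi_mulVec {m n : ℕ} (A : Matrix (Fin m) (Fin n) ℝ) (i j : Fin m) (x : Fin n → ℝ) :
    kkPhi A i j *ᵥ x = Function.update (A *ᵥ x) i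
      (((A *ᵥ x) i - (A i ⬝ᵥ A j) * (A *ᵥ x) j) / √(1 - (A i ⬝ᵥ A j) ^ 2)) := by
  rw [kkPhi, updateRow_mulVec]
  congr 1
  simp only [dotProduct, mulVec, div_mul_eq_mul_div, sub_mul, mul_assoc, ← sum_div,
    sum_sub_distrib, ← mul_sum]

theorem dotProduct_self_mulVec_sub_le_kkPhi {m n : ℕ} {A : Matrix (Fin m) (Fin n) ℝ}
    {i j : Fin m} (hc : (A i ⬝ᵥ A j) ^ 2 < 1) (x : Fin n → ℝ) :
    (A *ᵥ x) ⬝ᵥ (A *ᵥ x) - 2 * ((A i ⬝ᵥ A j) * (A *ᵥ x) i * (A *ᵥ x) j)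
      ≤ (kkPhi A i j *ᵥ x) ⬝ᵥ (kkPhi A i j *ᵥ x) := by
  rw [kkPhi_mulVec, update_dotProduct_update_self, div_pow, Real.sq_sqrt (by linarith)]
  linarith [sq_sub_two_mul_le_sq_sub_div (a := (A *ᵥ x) i) (b := (A *ᵥ x) j) hc]

theorem kaczmarz_kac_expectation_lower_bound {m n : ℕ} (hm : 2 ≤ m)
    (A : Matrix (Fin m) (Fin n) ℝ)
    (hnorm : ∀ i, ∑ k, (A i k) ^ 2 = 1)
    (hdist : ∀ i j, i ≠ j → A i ≠ A j ∧ A i ≠ -A j)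
    (x : Fin n → ℝ) :
    (1 / ((m : ℝ) * ((m : ℝ) - 1))) *
        ∑ i : Fin m, ∑ j ∈ Finset.univ.filter (fun j => j ≠ i),
          ∑ k, ((kkPhi A i j).mulVec x k) ^ 2
      ≥ (∑ k, (A.mulVec x k) ^ 2) +
        (2 / ((m : ℝ) * ((m : ℝ) - 1))) *
          ((∑ k, (A.mulVec x k) ^ 2) - ∑ k, (Aᵀ.mulVec (A.mulVec x) k) ^ 2) := by
  simp only [sum_sq_eq_dotProduct_self] at hnorm ⊢
  have hc (i j : Fin m) (hij : i ≠ j) : (A i ⬝ᵥ A j) ^ 2 < 1 :=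
    sq_dotProduct_lt_one (hnorm i) (hnorm j) (hdist i j hij).1 (hdist i j hij).2
  have hm1 : (0 : ℝ) < m - 1 := by
    have : (2 : ℝ) ≤ m := by exact_mod_cast hm
    linarith
  set a := A *ᵥ x
  have hsum : m * (m - 1) * (a ⬝ᵥ a) - 2 * ((Aᵀ *ᵥ a) ⬝ᵥ (Aᵀ *ᵥ a) - a ⬝ᵥ a)
      ≤ ∑ i, ∑ j ∈ univ.filter (· ≠ i), (kkPhi A i j *ᵥ x) ⬝ᵥ (kkPhi A i j *ᵥ x) := by
    calc _ = ∑ i, ∑ j ∈ univ.filter (· ≠ i), (a ⬝ᵥ a - 2 * ((A i ⬝ᵥ A j) * a i * a j)) := by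
          rw [← sum_offDiag_gram_eq hnorm]
          simp only [sum_sub_distrib, ← mul_sum, sum_const, filter_ne',
            card_erase_of_mem (mem_univ _), card_univ, Fintype.card_fin, nsmul_eq_mul]
          push_cast [Nat.cast_sub (by omega : 1 ≤ m)]
          ring
      _ ≤ _ := sum_le_sum fun i _ => sum_le_sum fun j hj =>
          dotProduct_self_mulVec_sub_le_kkPhi (hc i j (mem_filter.mp hj).2.symm) x
  calc a ⬝ᵥ a + 2 / (m * (m - 1)) * (a ⬝ᵥ a - (Aᵀ *ᵥ a) ⬝ᵥ (Aᵀ *ᵥ a))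
      = 1 / (m * (m - 1)) *
          (m * (m - 1) * (a ⬝ᵥ a) - 2 * ((Aᵀ *ᵥ a) ⬝ᵥ (Aᵀ *ᵥ a) - a ⬝ᵥ a)) := by
        field_simp [hm1.ne']
        ring
    _ ≤ _ := mul_le_mul_of_nonneg_left hsum (by positivity)
end

section
/- Let A ∈ ℝ^{m×n} (m ≥ 2) have rows A_1,…,A_m with ‖A_i‖ = 1 for all i and A_i ≠ ±A_j for i ≠ j. Then for every x ∈ ℝ^n, (1/(m(m−1))) · Σ_{i≠j} ‖φ_{i,j}(A) x‖² = ‖Ax‖² + (1/(m(m−1))) · Σ_{i≠j} [ −⟨A_i,x⟩² + (⟨A_i,x⟩ − ⟨A_i,A_j⟩⟨A_j,x⟩)² / (1 − ⟨A_i,A_j⟩²) ]. -/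
/-!
Only row `i` changes under `φ_{i,j}`, so `‖φ_{i,j}(A) x‖² - ‖A x‖²` is the difference of the
squares of the new and the old `i`-th coordinate, and the new one is
`(⟨A_i,x⟩ - ⟨A_i,A_j⟩⟨A_j,x⟩) / √(1 - ⟨A_i,A_j⟩²)`. Cauchy–Schwarz for unit rows gives
`⟨A_i,A_j⟩² ≤ 1`, so squaring removes the square root; averaging over the `m(m-1)` ordered
pairs then splits off the constant `‖A x‖²`.
-/

open Finset Matrix

lemma sq_sum_mul_le_one {ι : Type*} [Fintype ι] {u v : ι → ℝ}
    (hu : ∑ k, u k ^ 2 = 1) (hv : ∑ k, v k ^ 2 = 1) : (∑ k, u k * v k) ^ 2 ≤ 1 := by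
  simpa [hu, hv] using sum_mul_sq_le_sq_mul_sq univ u v

lemma sum_sq_update {ι R : Type*} [Fintype ι] [DecidableEq ι] [CommRing R]
    (f : ι → R) (i : ι) (b : R) :
    ∑ k, Function.update f i b k ^ 2 = ∑ k, f k ^ 2 - f i ^ 2 + b ^ 2 := by
  rw [← add_sum_erase _ _ (mem_univ i), ← add_sum_erase _ (fun k => f k ^ 2) (mem_univ i),
    Function.update_self,
    sum_congr rfl fun k hk => by rw [Function.update_of_ne (ne_of_mem_erase hk)]]
  ring

lemma sum_sq_updateRow_mulVec {l m R : Type*} [Fintype l] [DecidableEq l] [Fintype m]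
    [CommRing R] (M : Matrix l m R) (i : l) (r x : m → R) :
    ∑ k, (M.updateRow i r *ᵥ x) k ^ 2
      = ∑ k, (M *ᵥ x) k ^ 2 - (M i ⬝ᵥ x) ^ 2 + (r ⬝ᵥ x) ^ 2 := by
  rw [updateRow_mulVec, sum_sq_update]
  rfl

lemma sum_sq_kkPhi_mulVec {m n : ℕ} (A : Matrix (Fin m) (Fin n) ℝ) (i j : Fin m)
    (hc : (∑ l, A i l * A j l) ^ 2 ≤ 1) (x : Fin n → ℝ) :
    ∑ k, ((kkPhi A i j).mulVec x k) ^ 2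
      = (∑ k, (A.mulVec x k) ^ 2) +
        (-(∑ k, A i k * x k) ^ 2 +
          ((∑ k, A i k * x k) - (∑ l, A i l * A j l) * (∑ k, A j k * x k)) ^ 2 /
            (1 - (∑ l, A i l * A j l) ^ 2)) := by
  set c := ∑ l, A i l * A j l
  have hrow : (fun k => (A i k - c * A j k) / √(1 - c ^ 2)) ⬝ᵥ x
      = ((∑ k, A i k * x k) - c * (∑ k, A j k * x k)) / √(1 - c ^ 2) := by
    simp only [dotProduct, sum_div, mul_sum, ← sum_sub_distrib]
    exact sum_congr rfl fun k _ => by ring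
  rw [kkPhi, sum_sq_updateRow_mulVec, hrow, div_pow, Real.sq_sqrt (by linarith)]
  simp only [dotProduct]
  ring

lemma sum_filter_ne_const {ι : Type*} [Fintype ι] [DecidableEq ι] (a : ℝ) :
    ∑ i : ι, ∑ _j ∈ univ.filter (fun j => j ≠ i), a
      = (Fintype.card ι : ℝ) * ((Fintype.card ι : ℝ) - 1) * a := by
  simp only [filter_ne', sum_const, card_erase_of_mem (mem_univ _), card_univ, nsmul_eq_mul]
  rcases isEmpty_or_nonempty ι with hι | hι
  · simp
  · rw [Nat.cast_sub Fintype.card_pos]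
    ring

lemma average_offDiag_const_add {ι : Type*} [Fintype ι] [DecidableEq ι]
    (hι : 2 ≤ Fintype.card ι) (a : ℝ) (f : ι → ι → ℝ) :
    (1 / ((Fintype.card ι : ℝ) * ((Fintype.card ι : ℝ) - 1))) *
        ∑ i, ∑ j ∈ univ.filter (fun j => j ≠ i), (a + f i j)
      = a + (1 / ((Fintype.card ι : ℝ) * ((Fintype.card ι : ℝ) - 1))) *
        ∑ i, ∑ j ∈ univ.filter (fun j => j ≠ i), f i j := by
  have hN : (2 : ℝ) ≤ Fintype.card ι := by exact_mod_cast hι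
  have hpairs : (Fintype.card ι : ℝ) * ((Fintype.card ι : ℝ) - 1) ≠ 0 := by nlinarith
  rw [sum_congr rfl fun i _ => sum_add_distrib, sum_add_distrib, sum_filter_ne_const, mul_add,
    ← mul_assoc, one_div_mul_cancel hpairs, one_mul]

theorem kaczmarz_kac_expectation_identity_general {m n : ℕ} (hm : 2 ≤ m)
    (A : Matrix (Fin m) (Fin n) ℝ)
    (hnorm : ∀ i, ∑ k, (A i k) ^ 2 = 1)
    (x : Fin n → ℝ) :
    (1 / ((m : ℝ) * ((m : ℝ) - 1))) *
        ∑ i : Fin m, ∑ j ∈ Finset.univ.filter (fun j => j ≠ i),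
          ∑ k, ((kkPhi A i j).mulVec x k) ^ 2
      = (∑ k, (A.mulVec x k) ^ 2) +
        (1 / ((m : ℝ) * ((m : ℝ) - 1))) *
          ∑ i : Fin m, ∑ j ∈ Finset.univ.filter (fun j => j ≠ i),
            (-(∑ k, A i k * x k) ^ 2 +
              ((∑ k, A i k * x k) - (∑ l, A i l * A j l) * (∑ k, A j k * x k)) ^ 2 /
                (1 - (∑ l, A i l * A j l) ^ 2)) := by
  simp_rw [sum_sq_kkPhi_mulVec A _ _ (sq_sum_mul_le_one (hnorm _) (hnorm _))]
  simpa using average_offDiag_const_add (ι := Fin m) (by simpa using hm) _ _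

theorem kaczmarz_kac_expectation_identity {m n : ℕ} (hm : 2 ≤ m)
    (A : Matrix (Fin m) (Fin n) ℝ)
    (hnorm : ∀ i, ∑ k, (A i k) ^ 2 = 1)
    (hdist : ∀ i j, i ≠ j → A i ≠ A j ∧ A i ≠ -A j)
    (x : Fin n → ℝ) :
    (1 / ((m : ℝ) * ((m : ℝ) - 1))) *
        ∑ i : Fin m, ∑ j ∈ Finset.univ.filter (fun j => j ≠ i),
          ∑ k, ((kkPhi A i j).mulVec x k) ^ 2
      = (∑ k, (A.mulVec x k) ^ 2) +
        (1 / ((m : ℝ) * ((m : ℝ) - 1))) *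
          ∑ i : Fin m, ∑ j ∈ Finset.univ.filter (fun j => j ≠ i),
            (-(∑ k, A i k * x k) ^ 2 +
              ((∑ k, A i k * x k) - (∑ l, A i l * A j l) * (∑ k, A j k * x k)) ^ 2 /
                (1 - (∑ l, A i l * A j l) ^ 2)) :=
  kaczmarz_kac_expectation_identity_general hm A hnorm x
end

section
/- Let A ∈ ℝ^{m×n} have rows A_1,…,A_m with ‖A_i‖ = 1 for all i and A_i ≠ ±A_j for i ≠ j. Then for every x ∈ ℝ^n, Σ_{i≠j} [ −⟨A_i,x⟩² + (⟨A_i,x⟩ − ⟨A_i,A_j⟩⟨A_j,x⟩)² / (1 − ⟨A_i,A_j⟩²) ] ≥ 2( ‖Ax‖² − ‖AᵀAx‖² ). -/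
/-!
Write `c = A x` and `g i j = ⟨A i, A j⟩`. Since the Gram matrix `A Aᵀ` has unit diagonal,
`‖A x‖² - ‖Aᵀ A x‖² = -∑_{i ≠ j} g i j c i c j`, so it suffices to compare the sums termwise.
Unit vectors with `A i ≠ ± A j` have `g² < 1`, and then
`(c_i - g c_j)² - (1 - g²)(c_i² - 2 g c_i c_j) = g² (c_i² - 2 g c_i c_j + c_j²) ≥ 0`.
-/

open Finset Matrix

namespace Matrix

variable {ι R : Type*} [Fintype ι] [CommRing R] [LinearOrder R] [IsStrictOrderedRing R]

lemma dotProduct_self_pos {v : ι → R} (hv : v ≠ 0) : 0 < v ⬝ᵥ v :=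
  (Finset.sum_nonneg fun i _ => mul_self_nonneg (v i)).lt_of_ne'
    (dotProduct_self_eq_zero.not.mpr hv)

lemma sq_dotProduct_lt_one_of_unit {v w : ι → R} (hv : v ⬝ᵥ v = 1) (hw : w ⬝ᵥ w = 1)
    (hne : v ≠ w) (hne' : v ≠ -w) : (v ⬝ᵥ w) ^ 2 < 1 := by
  have hsub : 0 < (v - w) ⬝ᵥ (v - w) := dotProduct_self_pos (sub_ne_zero.mpr hne)
  have hadd : 0 < (v + w) ⬝ᵥ (v + w) :=
    dotProduct_self_pos fun h => hne' (eq_neg_of_add_eq_zero_left h)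
  simp only [sub_dotProduct, dotProduct_sub, add_dotProduct, dotProduct_add, hv, hw,
    dotProduct_comm w v] at hsub hadd
  nlinarith

end Matrix

lemma neg_two_mul_le_of_sq_lt_one {R : Type*} [Field R] [LinearOrder R] [IsStrictOrderedRing R]
    {g : R} (hg : g ^ 2 < 1) (a b : R) :
    -2 * (g * (a * b)) ≤ -a ^ 2 + (a - g * b) ^ 2 / (1 - g ^ 2) := by
  have hpos : 0 < 1 - g ^ 2 := sub_pos.mpr hg
  have hdefect : 0 ≤ g ^ 2 * (a ^ 2 - 2 * g * a * b + b ^ 2) := by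
    refine mul_nonneg (sq_nonneg g) ?_
    nlinarith [sq_nonneg (a - g * b), mul_nonneg hpos.le (sq_nonneg b)]
  have h : a ^ 2 - 2 * (g * (a * b)) ≤ (a - g * b) ^ 2 / (1 - g ^ 2) := by
    rw [le_div_iff₀ hpos]
    linarith
  linarith

lemma Matrix.sum_sq_transpose_mulVec {ι κ R : Type*} [Fintype ι] [Fintype κ] [CommSemiring R]
    (A : Matrix ι κ R) (y : ι → R) :
    ∑ k, (Aᵀ *ᵥ y) k ^ 2 = ∑ i, ∑ j, (A i ⬝ᵥ A j) * (y i * y j) := by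
  have h : ∑ k, (Aᵀ *ᵥ y) k ^ 2 = y ⬝ᵥ ((A * Aᵀ) *ᵥ y) := by
    rw [← mulVec_mulVec, dotProduct_mulVec, ← mulVec_transpose]
    simp only [dotProduct, sq]
  rw [h]
  simp only [dotProduct, mulVec, mul_apply, transpose_apply, Finset.mul_sum]
  refine Finset.sum_congr rfl fun i _ => Finset.sum_congr rfl fun j _ => ?_
  simp only [Finset.mul_sum, Finset.sum_mul]
  exact Finset.sum_congr rfl fun k _ => by ring

lemma Finset.sum_sum_eq_sum_diag_add_sum_ne {ι M : Type*} [Fintype ι] [DecidableEq ι]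
    [AddCommMonoid M] (f : ι → ι → M) :
    ∑ i, ∑ j, f i j = ∑ i, f i i + ∑ i, ∑ j ∈ univ.filter (fun j => j ≠ i), f i j := by
  rw [← Finset.sum_add_distrib]
  exact Finset.sum_congr rfl fun i _ => by
    rw [Finset.filter_ne', Finset.add_sum_erase _ _ (Finset.mem_univ i)]

theorem kaczmarz_kac_sigma_lower_bound {m n : ℕ}
    (A : Matrix (Fin m) (Fin n) ℝ)
    (hnorm : ∀ i, ∑ k, (A i k) ^ 2 = 1)
    (hdist : ∀ i j, i ≠ j → A i ≠ A j ∧ A i ≠ -A j)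
    (x : Fin n → ℝ) :
    ∑ i : Fin m, ∑ j ∈ Finset.univ.filter (fun j => j ≠ i),
        (-(∑ k, A i k * x k) ^ 2 +
          ((∑ k, A i k * x k) - (∑ l, A i l * A j l) * (∑ k, A j k * x k)) ^ 2 /
            (1 - (∑ l, A i l * A j l) ^ 2))
      ≥ 2 * ((∑ k, (A.mulVec x k) ^ 2) - ∑ k, (Aᵀ.mulVec (A.mulVec x) k) ^ 2) := by
  have hunit : ∀ i, A i ⬝ᵥ A i = 1 := fun i => by simpa only [dotProduct, sq] using hnorm i
  have hrhs : 2 * (∑ k, (A *ᵥ x) k ^ 2 - ∑ k, (Aᵀ *ᵥ (A *ᵥ x)) k ^ 2) =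
      ∑ i, ∑ j ∈ univ.filter (fun j => j ≠ i),
        -2 * ((A i ⬝ᵥ A j) * ((A *ᵥ x) i * (A *ᵥ x) j)) := by
    rw [sum_sq_transpose_mulVec, sum_sum_eq_sum_diag_add_sum_ne]
    simp only [hunit, one_mul, ← sq, ← Finset.mul_sum]
    ring
  rw [ge_iff_le, hrhs]
  refine Finset.sum_le_sum fun i _ => Finset.sum_le_sum fun j hj => ?_
  have hij : i ≠ j := (Finset.mem_filter.mp hj).2.symm
  exact neg_two_mul_le_of_sq_lt_one
    (sq_dotProduct_lt_one_of_unit (hunit i) (hunit j) (hdist i j hij).1 (hdist i j hij).2) _ _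
end

section
/- Fix k ∈ ℕ and a, b ∈ ℝ, and define f : ℝ × ℝ → ℝ by f(t,x) = e^{−2·sin(kπ/4)²·t}·(a·sin(kx) + b·cos(kx)). Then f satisfies, for all t and x, ∂f/∂t (t,x) = −f(t,x) + (1/2)·f(t, x − π/2) + (1/2)·f(t, x + π/2). -/
/-! Each Fourier mode `a sin(kx) + b cos(kx)` is an eigenfunction of the averaged shift
`g ↦ (g(· - h) + g(· + h)) / 2` with eigenvalue `cos(kh)`. For `h = π/2` the generator
`-1 + (averaged shift)` therefore acts on it by `cos(kπ/2) - 1 = -2 sin(kπ/4)²`, and the mode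
multiplied by `exp(-2 sin(kπ/4)² t)` solves the equation. -/

open Real

theorem sin_cos_mode_shift_average (a b c x h : ℝ) :
    (a * sin (c * (x - h)) + b * cos (c * (x - h))) / 2
      + (a * sin (c * (x + h)) + b * cos (c * (x + h))) / 2
      = cos (c * h) * (a * sin (c * x) + b * cos (c * x)) := by
  rw [mul_sub, mul_add, sin_sub, sin_add, cos_sub, cos_add]
  ring

theorem cos_mul_pi_div_two_sub_one (c : ℝ) :
    cos (c * (π / 2)) - 1 = -2 * sin (c * π / 4) ^ 2 := by
  rw [show c * (π / 2) = 2 * (c * π / 4) by ring, cos_two_mul_eq_one_sub]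
  ring

theorem hasDerivAt_exp_mul_mul (μ v t : ℝ) :
    HasDerivAt (fun s => exp (μ * s) * v) (μ * (exp (μ * t) * v)) t := by
  have h := ((hasDerivAt_id t).const_mul μ).exp.mul_const v
  simp only [id, mul_one] at h
  exact h.congr_deriv (by ring)

theorem linearized_mean_field_solution (k : ℕ) (a b : ℝ) :
    ∀ (t x : ℝ),
      HasDerivAt
        (fun s : ℝ => Real.exp (-2 * Real.sin ((k : ℝ) * π / 4) ^ 2 * s) *
          (a * Real.sin ((k : ℝ) * x) + b * Real.cos ((k : ℝ) * x)))
        (-(Real.exp (-2 * Real.sin ((k : ℝ) * π / 4) ^ 2 * t) *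
              (a * Real.sin ((k : ℝ) * x) + b * Real.cos ((k : ℝ) * x)))
          + (1 / 2) * (Real.exp (-2 * Real.sin ((k : ℝ) * π / 4) ^ 2 * t) *
              (a * Real.sin ((k : ℝ) * (x - π / 2)) + b * Real.cos ((k : ℝ) * (x - π / 2))))
          + (1 / 2) * (Real.exp (-2 * Real.sin ((k : ℝ) * π / 4) ^ 2 * t) *
              (a * Real.sin ((k : ℝ) * (x + π / 2)) + b * Real.cos ((k : ℝ) * (x + π / 2)))))
        t := by
  intro t x
  convert hasDerivAt_exp_mul_mul (-2 * sin ((k : ℝ) * π / 4) ^ 2)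
    (a * sin ((k : ℝ) * x) + b * cos ((k : ℝ) * x)) t using 1
  have shift := sin_cos_mode_shift_average a b k x (π / 2)
  rw [← cos_mul_pi_div_two_sub_one]
  linear_combination exp ((cos ((k : ℝ) * (π / 2)) - 1) * t) * shift
end
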